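/- arXiv:2308.03980 — 4 statements merged into one kernel-verified Lean document; each statement's English description precedes it below -/
import Mathlib

section
/- For any graph G on n vertices, X_G = Σ_{A ⊆ E(G)} (−1)^{|A|} p_{π(A)}, where π(A) is the partition of n whose parts are the orders of the connected components of the spanning subgraph (V(G), A). -/
open SimpleGraph

/-- Proper coloring for an edge set over `Sym2 V` (loops allowed): adjacent (or equal, for a
loop) endpoints must receive different colors. -/
def ProperCol {V : Type*} (E : Set (Sym2 V)) (k : V -> Nat) : Prop :=
  forall u v : V, s(u, v) ∈ E -> k u ≠ k v

/-- Weighted chromatic symmetric function `X_{(G,w)}` as a formal power series in the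
variables `x_0, x_1, …` : the coefficient of a monomial `d` is the number of proper
colorings whose total weight in color `i` is `d i` for every `i`. -/
noncomputable def csfW {V : Type*} (E : Set (Sym2 V)) (w : V -> Nat) : MvPowerSeries Nat Int :=
  fun d => (Nat.card {k : V -> Nat |
    ProperCol E k ∧ forall i : Nat, (∑ᶠ v ∈ {v : V | k v = i}, w v) = d i} : Int)

/-- Chromatic symmetric function `X_G` of a simple graph. -/
noncomputable def csf {V : Type*} (G : SimpleGraph V) : MvPowerSeries Nat Int :=
  csfW G.edgeSet (fun _ => 1)

/-- The power-sum symmetric function `p_k = Σ_i x_i ^ k`. -/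
noncomputable def psum (k : Nat) : MvPowerSeries Nat Int :=
  open scoped Classical in
  fun d => if ∃ i : Nat, d = Finsupp.single i k then 1 else 0

/-- `p_lam` for a multiset of parts `lam`. -/
noncomputable def pProd (m : Multiset Nat) : MvPowerSeries Nat Int :=
  (m.map psum).prod

/-- The multiset of the total `w`-weights of the vertex sets of the connected components
of `G`; with `w = 1` this is the partition `π(A)` of the orders of the components. -/
noncomputable def piW {V : Type*} [Finite V] (G : SimpleGraph V) (w : V -> Nat) : Multiset Nat :=
  letI : Fintype G.ConnectedComponent := Fintype.ofFinite _
  (Finset.univ : Finset G.ConnectedComponent).val.map fun c => ∑ᶠ v ∈ c.supp, w v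

/-!
Expand coefficients as counts of colorings. For a coloring `k`, the alternating sum
`∑_{A ⊆ E(G)} (-1)^|A|` over the edge sets `A` on which `k` is constant is `1` if no edge of `G`
is monochromatic and `0` otherwise, so summing over `k` counts the proper colorings. Swapping the
two sums, a coloring constant on the edges of `A` is a coloring of the connected components of
`(V, A)`, and those of weight `x^d` are counted by the coefficient of `x^d` in
`∏_C p_{|C|} = p_{π(A)}`. The argument is the same for positive vertex weights `w`, with
`p_{w(C)}` in place of `p_{|C|}`.
-/

open Finset

open scoped Classical in
lemma coeff_psum (n : ℕ) (d : ℕ →₀ ℕ) :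
    MvPowerSeries.coeff d (psum n) = if ∃ i, d = Finsupp.single i n then 1 else 0 :=
  rfl

section Colorings

variable {ι : Type*} [Fintype ι]

noncomputable def colorWeight (w f : ι → ℕ) : ℕ →₀ ℕ :=
  ∑ i, Finsupp.single (f i) (w i)

lemma colorWeight_apply (w f : ι → ℕ) (j : ℕ) :
    colorWeight w f j = ∑ i with f i = j, w i := by
  simp [colorWeight, Finsupp.finsetSum_apply, Finsupp.single_apply, sum_ite]

open scoped Classical in
/-- For positive weights the restriction of the colours to `d.support` is automatic
(`mem_colorings`); it only serves to make the set finite. -/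
noncomputable def colorings (w : ι → ℕ) (d : ℕ →₀ ℕ) : Finset (ι → ℕ) :=
  {f ∈ Fintype.piFinset fun _ => d.support | colorWeight w f = d}

variable {w : ι → ℕ}

lemma mem_colorings (hw : ∀ i, w i ≠ 0) {d : ℕ →₀ ℕ} {f : ι → ℕ} :
    f ∈ colorings w d ↔ colorWeight w f = d := by
  classical
  refine ⟨fun hf => (mem_filter.mp hf).2, fun hf => mem_filter.mpr ⟨?_, hf⟩⟩
  refine Fintype.mem_piFinset.mpr fun i => Finsupp.mem_support_iff.mpr fun hzero => ?_
  rw [← hf, colorWeight_apply] at hzero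
  exact hw i (sum_eq_zero_iff.mp hzero i (mem_filter.mpr ⟨mem_univ i, rfl⟩))

lemma coeff_prod_psum (hw : ∀ i, w i ≠ 0) (d : ℕ →₀ ℕ) :
    MvPowerSeries.coeff d (∏ i, psum (w i)) = #(colorings w d) := by
  classical
  have hterm (l : ι →₀ ℕ →₀ ℕ) : ∏ i, MvPowerSeries.coeff (l i) (psum (w i))
      = if ∀ i, ∃ j, l i = Finsupp.single j (w i) then 1 else 0 := by
    simp only [coeff_psum, prod_boole, mem_univ, true_implies]
  rw [MvPowerSeries.coeff_prod, sum_congr rfl fun l _ => hterm l, sum_boole, Nat.cast_inj]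
  symm
  refine card_nbij
    (fun f : ι → ℕ => Finsupp.equivFunOnFinite.symm fun i => Finsupp.single (f i) (w i))
    (fun f hf => ?_) (fun f _ g _ hfg => ?_) (fun l hl => ?_)
  · refine mem_filter.mpr ⟨mem_finsuppAntidiag.mpr ⟨?_, subset_univ _⟩, fun i => ⟨f i, rfl⟩⟩
    exact (mem_colorings hw).mp hf
  · funext i
    exact (Finsupp.single_left_inj (hw i)).mp (DFunLike.congr_fun hfg i)
  · obtain ⟨hl, hsingle⟩ := mem_filter.mp hl
    choose f hf using hsingle
    refine ⟨f, (mem_colorings hw).mpr ?_, ?_⟩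
    · rw [← (mem_finsuppAntidiag.mp hl).1]
      exact sum_congr rfl fun i _ => (hf i).symm
    · ext1 i
      exact (hf i).symm

end Colorings

theorem SimpleGraph.Reachable.eq_of_forall_adj {V β : Type*} {H : SimpleGraph V} {k : V → β}
    (hk : ∀ u v, H.Adj u v → k u = k v) {u v : V} (h : H.Reachable u v) : k u = k v := by
  obtain ⟨p⟩ := h
  induction p with
  | nil => rfl
  | cons hadj _ ih => exact (hk _ _ hadj).trans ih

section Components

variable {V : Type*} [Fintype V] (H : SimpleGraph V) (w : V → ℕ)

open scoped Classical in
noncomputable def componentWeight (c : H.ConnectedComponent) : ℕ :=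
  ∑ v with H.connectedComponentMk v = c, w v

lemma pProd_piW [Fintype H.ConnectedComponent] :
    pProd (piW H w) = ∏ c, psum (componentWeight H w c) := by
  classical
  have hweight (c : H.ConnectedComponent) : ∑ᶠ v ∈ c.supp, w v = componentWeight H w c := by
    rw [componentWeight, ← finsum_mem_coe_finset, coe_filter_univ]
    rfl
  simp only [pProd, piW, Multiset.map_map, hweight]
  rw [prod_eq_multiset_prod]
  congr!

lemma colorWeight_comp_connectedComponentMk [Fintype H.ConnectedComponent]
    (f : H.ConnectedComponent → ℕ) :
    colorWeight w (f ∘ H.connectedComponentMk) = colorWeight (componentWeight H w) f := by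
  classical
  simp only [colorWeight, componentWeight, Function.comp_apply, Finsupp.single_finsetSum]
  rw [← sum_fiberwise univ H.connectedComponentMk]
  refine sum_congr rfl fun c _ => sum_congr rfl fun v hv => ?_
  rw [(mem_filter.mp hv).2]

variable {w}

lemma componentWeight_ne_zero (hw : ∀ v, w v ≠ 0) (c : H.ConnectedComponent) :
    componentWeight H w c ≠ 0 := by
  classical
  obtain ⟨v, rfl⟩ := c.exists_rep
  exact fun hzero => hw v (sum_eq_zero_iff.mp hzero v (mem_filter.mpr ⟨mem_univ v, rfl⟩))

open scoped Classical in
lemma coeff_pProd_piW (hw : ∀ v, w v ≠ 0) (d : ℕ →₀ ℕ) :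
    MvPowerSeries.coeff d (pProd (piW H w))
      = #{k ∈ colorings w d | ∀ u v, H.Adj u v → k u = k v} := by
  have : Fintype H.ConnectedComponent := Fintype.ofFinite _
  have hmk : Function.Surjective H.connectedComponentMk := Quot.mk_surjective
  rw [pProd_piW, coeff_prod_psum (componentWeight_ne_zero H hw),
    ← card_image_of_injective _ hmk.injective_comp_right]
  congr 2
  ext k
  simp only [mem_image, mem_filter, mem_colorings hw, mem_colorings (componentWeight_ne_zero H hw)]
  constructor
  · rintro ⟨f, hf, rfl⟩
    refine ⟨(colorWeight_comp_connectedComponentMk H w f).trans hf, fun u v huv => ?_⟩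
    exact congrArg f (ConnectedComponent.connectedComponentMk_eq_of_adj huv)
  · rintro ⟨hk, hadj⟩
    let f : H.ConnectedComponent → ℕ := Quot.lift k fun _ _ => Reachable.eq_of_forall_adj hadj
    exact ⟨f, (colorWeight_comp_connectedComponentMk H w f).symm.trans hk, rfl⟩

end Components

section Edges

variable {V : Type*}

lemma forall_adj_fromEdgeSet_iff (A : Set (Sym2 V)) (k : V → ℕ) :
    (∀ u v, (fromEdgeSet A).Adj u v → k u = k v) ↔ ∀ e ∈ A, (e.map k).IsDiag := by
  refine ⟨fun h => Sym2.forall.mpr fun u v huv => ?_, fun h u v huv => ?_⟩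
  · rw [Sym2.map_mk, Sym2.mk_isDiag_iff]
    by_cases huv' : u = v
    · rw [huv']
    · exact h u v ((fromEdgeSet_adj A).mpr ⟨huv, huv'⟩)
  · simpa only [Sym2.map_mk, Sym2.mk_isDiag_iff] using h _ ((fromEdgeSet_adj A).mp huv).1

lemma properCol_iff_forall_not_isDiag (E : Set (Sym2 V)) (k : V → ℕ) :
    ProperCol E k ↔ ∀ e ∈ E, ¬ (e.map k).IsDiag := by
  simp only [ProperCol, Sym2.forall (f := fun e => e ∈ E → ¬ (e.map k).IsDiag), Sym2.map_mk,
    Sym2.mk_isDiag_iff]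

lemma finsum_fiber_eq_colorWeight [Fintype V] (w k : V → ℕ) (i : ℕ) :
    ∑ᶠ v ∈ {v | k v = i}, w v = colorWeight w k i := by
  classical
  rw [colorWeight_apply, ← finsum_mem_coe_finset, coe_filter_univ]

open scoped Classical in
lemma coeff_csfW [Fintype V] (E : Set (Sym2 V)) {w : V → ℕ} (hw : ∀ v, w v ≠ 0)
    (d : ℕ →₀ ℕ) :
    MvPowerSeries.coeff d (csfW E w) = #{k ∈ colorings w d | ProperCol E k} := by
  have hset : {k : V → ℕ | ProperCol E k ∧ ∀ i, ∑ᶠ v ∈ {v | k v = i}, w v = d i}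
      = ↑{k ∈ colorings w d | ProperCol E k} := by
    simp_rw [finsum_fiber_eq_colorWeight, ← DFunLike.ext_iff]
    ext k
    rw [coe_filter, Set.mem_ofPred, Set.mem_ofPred, mem_colorings hw, and_comm]
  rw [MvPowerSeries.coeff_apply, csfW, hset, Nat.card_coe_set_eq, Set.ncard_coe_finset]

end Edges

lemma sum_powerset_ite_forall_neg_one_pow_card {α : Type*} (s : Finset α) (p : α → Prop)
    [DecidablePred p] :
    ∑ A ∈ s.powerset, (if ∀ a ∈ A, p a then (-1 : ℤ) ^ #A else 0)
      = if ∀ a ∈ s, ¬ p a then 1 else 0 := by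
  classical
  have hfilter : {A ∈ s.powerset | ∀ a ∈ A, p a} = (s.filter p).powerset := by
    ext A
    simp only [mem_filter, mem_powerset, subset_iff]
    exact ⟨fun h a ha => ⟨h.1 ha, h.2 a ha⟩, fun h => ⟨fun a ha => (h ha).1, fun a ha => (h ha).2⟩⟩
  rw [← sum_filter, hfilter, sum_powerset_neg_one_pow_card]
  simp only [filter_eq_empty_iff]

theorem csfW_edgeSet_eq_sum_pProd {V : Type*} [Fintype V] [DecidableEq V] (G : SimpleGraph V)
    [DecidableRel G.Adj] {w : V → ℕ} (hw : ∀ v, w v ≠ 0) :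
    csfW G.edgeSet w = ∑ A ∈ G.edgeFinset.powerset,
      (-1 : MvPowerSeries ℕ ℤ) ^ #A * pProd (piW (fromEdgeSet (A : Set (Sym2 V))) w) := by
  classical
  ext d
  have hterm (A : Finset (Sym2 V)) :
      MvPowerSeries.coeff d
          ((-1 : MvPowerSeries ℕ ℤ) ^ #A * pProd (piW (fromEdgeSet (A : Set (Sym2 V))) w))
        = ∑ k ∈ colorings w d, if ∀ e ∈ A, (e.map k).IsDiag then (-1 : ℤ) ^ #A else 0 := by
    have hsign : (-1 : MvPowerSeries ℕ ℤ) ^ #A = MvPowerSeries.C ((-1) ^ #A) := by simp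
    rw [hsign, MvPowerSeries.coeff_C_mul, coeff_pProd_piW _ hw,
      ← sum_filter, sum_const, nsmul_eq_mul, mul_comm]
    simp only [forall_adj_fromEdgeSet_iff, mem_coe]
  calc MvPowerSeries.coeff d (csfW G.edgeSet w)
      = ∑ k ∈ colorings w d, if ∀ e ∈ G.edgeFinset, ¬ (e.map k).IsDiag then 1 else 0 := by
        rw [coeff_csfW _ hw, natCast_card_filter]
        refine sum_congr rfl fun k _ => if_congr ?_ rfl rfl
        simp only [properCol_iff_forall_not_isDiag, mem_edgeFinset]
    _ = ∑ k ∈ colorings w d, ∑ A ∈ G.edgeFinset.powerset,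
          if ∀ e ∈ A, (e.map k).IsDiag then (-1 : ℤ) ^ #A else 0 := by
        refine sum_congr rfl fun k _ => ?_
        -- `convert` only has to reconcile the `Decidable` instances of the two conditions
        convert (sum_powerset_ite_forall_neg_one_pow_card G.edgeFinset
          fun e => (e.map k).IsDiag).symm
    _ = _ := by
        rw [sum_comm, map_sum]
        exact sum_congr rfl fun A _ => (hterm A).symm

/-- Stanley's power-sum expansion
`X_G = Σ_{A ⊆ E(G)} (-1)^(|A|) p_{π(A)}`. -/
theorem stmt2 {V : Type*} [Fintype V] [DecidableEq V] (G : SimpleGraph V)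
    [DecidableRel G.Adj] :
    csf G = ∑ A ∈ G.edgeFinset.powerset,
      (-1 : MvPowerSeries Nat Int) ^ A.card *
        pProd (piW (SimpleGraph.fromEdgeSet (A : Set (Sym2 V))) (fun _ => 1)) :=
  csfW_edgeSet_eq_sum_pProd G fun _ => one_ne_zero
end

section
/- If F is a forest on n vertices with exactly j connected components, then Σ_{λ ⊢ n, l(λ)=k} c_λ(F) = (−1)^{n−k} · C(n−j, k−j) for every k, where c_λ(F) are the coefficients of X_F in the power-sum basis. -/
open SimpleGraph

/-!
Specialise `x_0 = ⋯ = x_{m-1} = t` and every other variable to `0`. This sends `p_λ` to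
`m ^ l(λ) t ^ |λ|` and `X_F` to `χ_F(m) t ^ n`, where `χ_F(m)` is the number of proper colourings
of `F` with `m` colours; hence `Σ_λ c_λ m ^ l(λ) = χ_F(m)` for every `m`. Inclusion–exclusion over
the monochromatic edges gives `χ_F(m) = Σ_{A ⊆ E} (-1) ^ |A| m ^ c(A)`, where `c(A)` counts the
components of `(V, A)`. In a forest `c(A) = n - |A|`, so `χ_F(m) = m ^ j (m - 1) ^ (n - j)`, and the
claim follows by comparing coefficients of these two polynomials in `m`.
-/

open Finset

theorem Nat.card_eq_card_subtype_ne_add_one {α : Type*} [Finite α] (a : α) :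
    Nat.card α = Nat.card {x // x ≠ a} + 1 := by
  classical
  have := Fintype.ofFinite α
  have : 0 < Fintype.card α := Fintype.card_pos_iff.mpr ⟨a⟩
  simp only [Nat.card_eq_fintype_card, Fintype.card_subtype_compl, Fintype.card_subtype_eq]
  omega

namespace SimpleGraph

section Forest

variable {V : Type*} {G : SimpleGraph V} {u v x y : V}

theorem Reachable.deleteEdges_or (h : G.Reachable x y) :
    (G.deleteEdges {s(u, v)}).Reachable x y ∨
      (G.deleteEdges {s(u, v)}).Reachable x u ∧ (G.deleteEdges {s(u, v)}).Reachable v y ∨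
      (G.deleteEdges {s(u, v)}).Reachable x v ∧ (G.deleteEdges {s(u, v)}).Reachable u y := by
  obtain ⟨p⟩ := h
  induction p with
  | nil => exact Or.inl .rfl
  | @cons x z y hxz p ih =>
    by_cases he : s(x, z) = s(u, v)
    · rcases Sym2.eq_iff.mp he with ⟨rfl, rfl⟩ | ⟨rfl, rfl⟩
      · rcases ih with h | ⟨-, h⟩ | ⟨-, h⟩
        · exact Or.inr (Or.inl ⟨.rfl, h⟩)
        · exact Or.inr (Or.inl ⟨.rfl, h⟩)
        · exact Or.inl h
      · rcases ih with h | ⟨-, h⟩ | ⟨-, h⟩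
        · exact Or.inr (Or.inr ⟨.rfl, h⟩)
        · exact Or.inl h
        · exact Or.inr (Or.inr ⟨.rfl, h⟩)
    · have hxz' : (G.deleteEdges {s(u, v)}).Reachable x z :=
        (deleteEdges_adj.mpr ⟨hxz, by simpa using he⟩).reachable
      rcases ih with h | ⟨h, h'⟩ | ⟨h, h'⟩
      · exact Or.inl (hxz'.trans h)
      · exact Or.inr (Or.inl ⟨hxz'.trans h, h'⟩)
      · exact Or.inr (Or.inr ⟨hxz'.trans h, h'⟩)

theorem IsBridge.card_connectedComponent_deleteEdges [Finite V] (huv : G.Adj u v)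
    (h : G.IsBridge s(u, v)) :
    Nat.card (G.deleteEdges {s(u, v)}).ConnectedComponent = Nat.card G.ConnectedComponent + 1 := by
  set G' := G.deleteEdges {s(u, v)}
  have hle : G' ≤ G := deleteEdges_le _
  have hbridge : ¬G'.Reachable u v := isBridge_iff.mp h
  let φ : {c : G'.ConnectedComponent // c ≠ G'.connectedComponentMk v} → G.ConnectedComponent :=
    fun c => c.1.map (Hom.ofLE hle)
  have hφ : Function.Bijective φ := by
    constructor
    · rintro ⟨c, hc⟩ ⟨c', hc'⟩ hcc'
      induction c using ConnectedComponent.ind with | _ x =>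
      induction c' using ConnectedComponent.ind with | _ y =>
      have hx : ¬G'.Reachable x v := fun hxv => hc (ConnectedComponent.sound hxv)
      have hy : ¬G'.Reachable y v := fun hyv => hc' (ConnectedComponent.sound hyv)
      refine Subtype.ext (ConnectedComponent.sound ?_)
      rcases (ConnectedComponent.exact hcc' : G.Reachable x y).deleteEdges_or (u := u) (v := v)
        with hxy | ⟨-, hvy⟩ | ⟨hxv, -⟩
      · exact hxy
      · exact absurd hvy.symm hy
      · exact absurd hxv hx
    · intro c
      induction c using ConnectedComponent.ind with | _ x =>
      by_cases hx : G'.connectedComponentMk x = G'.connectedComponentMk v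
      · refine ⟨⟨G'.connectedComponentMk u, fun hu => hbridge (ConnectedComponent.exact hu)⟩, ?_⟩
        have hxv : G.Reachable x v := (ConnectedComponent.exact hx).mono hle
        exact ConnectedComponent.sound (huv.reachable.trans hxv.symm)
      · exact ⟨⟨_, hx⟩, rfl⟩
  rw [← Nat.card_eq_of_bijective φ hφ]
  exact Nat.card_eq_card_subtype_ne_add_one _

theorem card_connectedComponent_bot [Finite V] :
    Nat.card (⊥ : SimpleGraph V).ConnectedComponent = Nat.card V :=
  (Nat.card_eq_of_bijective _ ⟨fun _ _ h => reachable_bot.mp (ConnectedComponent.exact h),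
    fun c => c.exists_rep⟩).symm

theorem IsAcyclic.card_connectedComponent_add_ncard_edgeSet [Finite V] (hG : G.IsAcyclic) :
    Nat.card G.ConnectedComponent + G.edgeSet.ncard = Nat.card V := by
  induction hn : G.edgeSet.ncard generalizing G with
  | zero =>
    obtain rfl : G = ⊥ := edgeSet_eq_empty.mp ((Set.ncard_eq_zero G.edgeSet.toFinite).mp hn)
    simp [card_connectedComponent_bot]
  | succ n ih =>
    obtain ⟨e, he⟩ := Set.nonempty_of_ncard_ne_zero (hn.trans_ne n.succ_ne_zero)
    induction e using Sym2.ind with | _ u v =>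
    have huv : G.Adj u v := G.mem_edgeSet.mp he
    have hn' : (G.deleteEdges {s(u, v)}).edgeSet.ncard = n := by
      rw [edgeSet_deleteEdges, Set.ncard_sdiff_singleton_of_mem he, hn, Nat.add_sub_cancel]
    have := ih (hG.anti (deleteEdges_le _)) hn'
    rw [(isAcyclic_iff_forall_adj_isBridge.mp hG huv).card_connectedComponent_deleteEdges huv]
      at this
    omega

end Forest

section Colorings

variable {V α : Type*} [Fintype V] [DecidableEq V] [Fintype α] [DecidableEq α]

theorem card_filter_forall_adj_eq (H : SimpleGraph V) [DecidableRel H.Adj] :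
    #{κ : V → α | ∀ u v, H.Adj u v → κ u = κ v} =
      Fintype.card α ^ Nat.card H.ConnectedComponent := by
  let e : {κ : V → α // ∀ u v, H.Adj u v → κ u = κ v} ≃ (H.ConnectedComponent → α) :=
    { toFun := fun κ => ConnectedComponent.lift κ.1 fun _ _ p hp => by
        clear hp
        induction p with
        | nil => rfl
        | cons h _ ih => exact (κ.2 _ _ h).trans ih
      invFun := fun f => ⟨f ∘ H.connectedComponentMk,
        fun _ _ h => congrArg f (ConnectedComponent.sound h.reachable)⟩
      left_inv := fun _ => rfl
      right_inv := fun f => funext fun c => c.ind fun _ => rfl }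
  rw [← Fintype.card_subtype, ← Nat.card_eq_fintype_card, Nat.card_congr e, Nat.card_fun,
    Nat.card_eq_fintype_card]

theorem card_proper_eq_sum_powerset (G : SimpleGraph V) [DecidableRel G.Adj] :
    (#{κ : V → α | ∀ u v, G.Adj u v → κ u ≠ κ v} : ℤ) =
      ∑ A ∈ G.edgeFinset.powerset, (-1) ^ #A *
        (Fintype.card α : ℤ) ^ Nat.card (fromEdgeSet (A : Set (Sym2 V))).ConnectedComponent := by
  let mono (e : Sym2 V) : Finset (V → α) := {κ | (e.map κ).IsDiag}
  have hproper :
      (G.edgeFinset.inf fun e => (mono e)ᶜ) = ({κ | ∀ u v, G.Adj u v → κ u ≠ κ v} : Finset _) := by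
    ext κ
    simp [mono, mem_inf, Sym2.forall]
  have hconstant (A : Finset (Sym2 V)) : A.inf mono =
      ({κ | ∀ u v, (fromEdgeSet (A : Set (Sym2 V))).Adj u v → κ u = κ v} : Finset _) := by
    ext κ
    simp only [mono, mem_inf, Sym2.forall, mem_filter, mem_univ, true_and, Sym2.map_mk,
      Sym2.mk_isDiag_iff, fromEdgeSet_adj, mem_coe]
    exact ⟨fun h u v huv => h u v huv.1, fun h u v huv =>
      (eq_or_ne u v).elim (fun huv' => huv' ▸ rfl) fun hne => h u v ⟨huv, hne⟩⟩
  rw [← hproper, inclusion_exclusion_card_inf_compl]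
  refine sum_congr rfl fun A _ => ?_
  rw [hconstant, card_filter_forall_adj_eq]
  push_cast
  rfl

theorem IsAcyclic.card_proper {G : SimpleGraph V} [DecidableRel G.Adj] (hG : G.IsAcyclic) :
    (#{κ : V → α | ∀ u v, G.Adj u v → κ u ≠ κ v} : ℤ) =
      (Fintype.card α : ℤ) ^ Nat.card G.ConnectedComponent *
        ((Fintype.card α : ℤ) - 1) ^ (Fintype.card V - Nat.card G.ConnectedComponent) := by
  set c := Nat.card G.ConnectedComponent
  have hforest := hG.card_connectedComponent_add_ncard_edgeSet
  rw [← coe_edgeFinset, Set.ncard_coe_finset, Nat.card_eq_fintype_card (α := V)] at hforest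
  have hsub : ∀ A ∈ G.edgeFinset.powerset,
      Nat.card (fromEdgeSet (A : Set (Sym2 V))).ConnectedComponent = c + (#G.edgeFinset - #A) := by
    intro A hA
    have hAE : (A : Set (Sym2 V)) ⊆ G.edgeSet := by
      rw [← coe_edgeFinset]
      exact coe_subset.mpr (mem_powerset.mp hA)
    have hedges : (fromEdgeSet (A : Set (Sym2 V))).edgeSet = A :=
      (edgeSet_fromEdgeSet _).trans <| sdiff_eq_left.mpr <|
        Set.disjoint_left.mpr fun _ he => G.not_isDiag_of_mem_edgeSet (hAE he)
    have hacyclic : (fromEdgeSet (A : Set (Sym2 V))).IsAcyclic :=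
      hG.anti ((fromEdgeSet_le G).mpr (Set.sdiff_subset.trans hAE))
    have hforestA := hacyclic.card_connectedComponent_add_ncard_edgeSet
    rw [hedges, Set.ncard_coe_finset, Nat.card_eq_fintype_card (α := V)] at hforestA
    have := card_le_card (mem_powerset.mp hA)
    omega
  rw [card_proper_eq_sum_powerset, sum_congr rfl fun A hA => by rw [hsub A hA],
    show Fintype.card V - c = #G.edgeFinset by omega, sub_eq_neg_add, ← sum_pow_mul_eq_add_pow,
    mul_sum]
  refine sum_congr rfl fun A _ => ?_
  ring

end Colorings

end SimpleGraph

section ColorCounts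

variable {V α β : Type*} [Fintype V]

noncomputable def colorCounts (κ : V → α) : α →₀ ℕ := ∑ v, Finsupp.single (κ v) 1

theorem colorCounts_apply [DecidableEq α] (κ : V → α) (a : α) :
    colorCounts κ a = #{v | κ v = a} := by
  simp [colorCounts, Finsupp.finsetSum_apply, Finsupp.single_apply, Finset.sum_boole]

theorem mapDomain_colorCounts (f : α → β) (κ : V → α) :
    (colorCounts κ).mapDomain f = colorCounts (f ∘ κ) := by
  simp [colorCounts, Finsupp.mapDomain_finsetSum]

theorem csf_apply (G : SimpleGraph V) (d : ℕ →₀ ℕ) :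
    csf G d = Nat.card {k : V → ℕ | ProperCol G.edgeSet k ∧ colorCounts k = d} := by
  simp only [csf, csfW, DFunLike.ext_iff, colorCounts_apply]
  congr! with k i
  rw [finsum_mem_eq_toFinset_sum]
  simp

end ColorCounts

section Specialization

open MvPowerSeries

variable (m : ℕ)

-- The specialisation `x_i ↦ t` for `i < m` and `x_i ↦ 0` for `i ≥ m`.
noncomputable def specializeOnes : MvPowerSeries ℕ ℤ →ₐ[ℤ] PowerSeries ℤ :=
  (rename fun _ : Fin m => ()).comp (killCompl Fin.valEmbedding)

theorem killCompl_psum {k : ℕ} (hk : k ≠ 0) :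
    killCompl Fin.valEmbedding (psum k) = ∑ i : Fin m, monomial (Finsupp.single i k) (1 : ℤ) := by
  ext y
  rw [coeff_killCompl, map_sum]
  simp only [coeff_monomial]
  by_cases hy : ∃ i, y = Finsupp.single i k
  · obtain ⟨i, rfl⟩ := hy
    rw [sum_eq_single_of_mem i (mem_univ i) fun j _ hji => if_neg fun h =>
      hji (Finsupp.single_left_injective hk h).symm, if_pos rfl]
    exact if_pos ⟨_, Finsupp.embDomain_single _ _ _⟩
  · rw [sum_eq_zero fun i _ => if_neg fun h => hy ⟨i, h⟩]
    refine if_neg ?_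
    rintro ⟨j, hj⟩
    have hjm : j < m := by
      by_contra hjm
      have := DFunLike.congr_fun hj j
      rw [Finsupp.embDomain_of_notMem_range _ _ _ (by simpa using hjm)] at this
      simp_all
    refine hy ⟨⟨j, hjm⟩, Finsupp.embDomain_injective Fin.valEmbedding ?_⟩
    rw [hj, Finsupp.embDomain_single]
    rfl

theorem specializeOnes_psum {k : ℕ} (hk : k ≠ 0) :
    specializeOnes m (psum k) = PowerSeries.monomial k (m : ℤ) := by
  rw [specializeOnes, AlgHom.comp_apply, killCompl_psum m hk, map_sum]
  simp only [rename_monomial, Finsupp.mapDomain_single, sum_const, card_univ, Fintype.card_fin,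
    ← map_nsmul, nsmul_one]
  rfl

theorem specializeOnes_pProd {μ : Multiset ℕ} (hμ : 0 ∉ μ) :
    specializeOnes m (pProd μ) = PowerSeries.monomial μ.sum ((m : ℤ) ^ Multiset.card μ) := by
  induction μ using Multiset.induction_on with
  | empty => simp [pProd]
  | cons k μ ih =>
    rw [Multiset.mem_cons, not_or] at hμ
    have hcons : pProd (k ::ₘ μ) = psum k * pProd μ := by simp [pProd]
    rw [hcons, map_mul, specializeOnes_psum m (Ne.symm hμ.1), ih hμ.2, Multiset.card_cons,
      Multiset.sum_cons, PowerSeries.monomial_mul_monomial, pow_succ']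

theorem specializeOnes_pProd_parts {n : ℕ} (lam : n.Partition) :
    specializeOnes m (pProd lam.parts) = PowerSeries.monomial n ((m : ℤ) ^ lam.parts.card) := by
  rw [specializeOnes_pProd m fun h => (lam.parts_pos h).false, lam.parts_sum]

variable {V : Type*} [Fintype V]

theorem killCompl_csf [DecidableEq V] (G : SimpleGraph V) [DecidableRel G.Adj] :
    killCompl Fin.valEmbedding (csf G) =
      ∑ κ : V → Fin m with ∀ u v, G.Adj u v → κ u ≠ κ v, monomial (colorCounts κ) (1 : ℤ) := by
  ext y
  rw [coeff_killCompl, map_sum]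
  simp only [coeff_monomial, sum_boole, filter_filter]
  have hval : ∀ κ : V → Fin m,
      colorCounts (fun v => (κ v : ℕ)) = (colorCounts κ).embDomain Fin.valEmbedding := by
    intro κ
    rw [Finsupp.embDomain_eq_mapDomain, mapDomain_colorCounts]
    rfl
  have hset :
      {k : V → ℕ | ProperCol G.edgeSet k ∧ colorCounts k = y.embDomain Fin.valEmbedding} =
      (fun (κ : V → Fin m) => Fin.val ∘ κ) ''
        ↑({κ | (∀ u v, G.Adj u v → κ u ≠ κ v) ∧ y = colorCounts κ} : Finset (V → Fin m)) := by
    ext k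
    simp only [Set.mem_ofPred_eq, coe_filter, mem_univ, true_and, Set.mem_image]
    constructor
    · rintro ⟨hk, hcount⟩
      have hlt : ∀ v, k v < m := by
        intro v
        by_contra hv
        have hpos : 0 < colorCounts k (k v) := by
          rw [colorCounts_apply]
          exact card_pos.mpr ⟨v, by simp⟩
        rw [hcount, Finsupp.embDomain_of_notMem_range _ _ _ (by simpa using hv)] at hpos
        exact hpos.false
      refine ⟨fun v => ⟨k v, hlt v⟩, ⟨fun u v huv h => hk u v huv (congrArg Fin.val h), ?_⟩, rfl⟩
      exact Finsupp.embDomain_injective Fin.valEmbedding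
        (hcount.symm.trans (hval fun v => ⟨k v, hlt v⟩))
    · rintro ⟨κ, ⟨hκ, rfl⟩, rfl⟩
      exact ⟨fun u v huv h => hκ u v huv (Fin.ext h), hval κ⟩
  change csf G _ = _
  rw [csf_apply, Nat.card_coe_set_eq, hset,
    Set.ncard_image_of_injective _ (Fin.val_injective.comp_left (α := V)), Set.ncard_coe_finset]

theorem specializeOnes_csf [DecidableEq V] (G : SimpleGraph V) [DecidableRel G.Adj] :
    specializeOnes m (csf G) = PowerSeries.monomial (Fintype.card V)
      (#{κ : V → Fin m | ∀ u v, G.Adj u v → κ u ≠ κ v} : ℤ) := by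
  have hconst (κ : V → Fin m) :
      colorCounts ((fun _ => ()) ∘ κ) = Finsupp.single () (Fintype.card V) := by
    simp [colorCounts]
  rw [specializeOnes, AlgHom.comp_apply, killCompl_csf, map_sum]
  simp only [rename_monomial, mapDomain_colorCounts, hconst, sum_const, ← map_nsmul, nsmul_one]
  rfl

end Specialization

namespace Polynomial

theorem sum_filter_eq_coeff_of_forall_eval_natCast {R ι : Type*} [CommRing R] [IsDomain R]
    [CharZero R] (s : Finset ι) (a : ι → R) (ℓ : ι → ℕ) (p : R[X])
    (h : ∀ m : ℕ, ∑ i ∈ s, a i * (m : R) ^ ℓ i = p.eval (m : R)) (k : ℕ) :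
    ∑ i ∈ s with ℓ i = k, a i = p.coeff k := by
  have hp : p = ∑ i ∈ s, C (a i) * X ^ ℓ i := by
    refine eq_of_infinite_eval_eq _ _
      ((Set.infinite_range_of_injective Nat.cast_injective).mono ?_)
    rintro _ ⟨m, rfl⟩
    simp [eval_finsetSum, h m]
  simp [hp, sum_filter, eq_comm]

theorem coeff_X_pow_mul_X_sub_one_pow {R : Type*} [CommRing R] {j n : ℕ} (hj : j ≤ n) (k : ℕ) :
    (X ^ j * (X - 1) ^ (n - j) : R[X]).coeff k =
      (-1) ^ (n - k) * if j ≤ k then ((n - j).choose (k - j) : R) else 0 := by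
  rw [coeff_X_pow_mul', sub_eq_add_neg, ← C_1, ← C_neg, coeff_X_add_C_pow]
  split_ifs with hjk
  · rcases le_or_gt k n with hkn | hkn
    · rw [show n - j - (k - j) = n - k by omega]
    · rw [Nat.choose_eq_zero_of_lt (by omega)]
      simp
  · simp

end Polynomial

open Polynomial in
/-- for a forest `F` on `n` vertices with `j` components,
`Σ_{lam : l(lam) = k} c_lam(F) = (-1)^(n-k) C(n-j, k-j)` for every `k`
(the binomial coefficient being `0` when `k < j`). -/
theorem stmt4 {V : Type*} [Fintype V] (F : SimpleGraph V) (hF : F.IsAcyclic)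
    (n : Nat) (hn : Fintype.card V = n)
    (j : Nat) (hj : j = Nat.card F.ConnectedComponent)
    (c : n.Partition → Int)
    (hc : csf F = ∑ᶠ lam : n.Partition, c lam • pProd lam.parts)
    (k : Nat) :
    (∑ᶠ lam ∈ {lam : n.Partition | lam.parts.card = k}, c lam) =
      (-1 : Int) ^ (n - k) * (if j ≤ k then ((n - j).choose (k - j) : Int) else 0) := by
  classical
  have hjn : j ≤ n := by
    have := hF.card_connectedComponent_add_ncard_edgeSet
    rw [Nat.card_eq_fintype_card (α := V), hn, ← hj] at this
    omega
  have heval (m : ℕ) : ∑ lam, c lam * (m : ℤ) ^ lam.parts.card =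
      (X ^ j * (X - 1) ^ (n - j) : ℤ[X]).eval (m : ℤ) := by
    have := congrArg (PowerSeries.coeff n ∘ specializeOnes m) hc
    simp only [Function.comp_apply, specializeOnes_csf, hF.card_proper, hn, ← hj,
      finsum_eq_sum_of_fintype, map_sum, map_zsmul, specializeOnes_pProd_parts,
      PowerSeries.coeff_monomial_same, smul_eq_mul] at this
    simp [← this]
  rw [finsum_mem_eq_toFinset_sum, Set.toFinset_ofPred,
    sum_filter_eq_coeff_of_forall_eval_natCast _ _ _ _ heval, coeff_X_pow_mul_X_sub_one_pow hjn]
end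

section
/- For any vertex-weighted graph (G, w) and any edge e of G (possibly a loop), the deletion-contraction formula X_{(G,w)} = X_{(G−e,w)} − X_{(G/e, w_{G/e})} holds. -/
open SimpleGraph

/-- The setoid identifying the endpoints of the edges in `S` (contraction of `S`). -/
def cSetoid {V : Type*} (S : Set (Sym2 V)) : Setoid V :=
  Relation.EqvGen.setoid (fun x y => s(x, y) ∈ S)

/-- Vertex set of the contraction `G/S`. -/
def CVert {V : Type*} (S : Set (Sym2 V)) : Type _ := Quotient (cSetoid S)

/-- Quotient map onto the contracted vertex set. -/
def cmk {V : Type*} (S : Set (Sym2 V)) : V -> CVert S := Quotient.mk _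

/-- Edge set of the contraction `G/S`: the images of the edges of `E` outside `S`
(edges joining identified vertices become loops). -/
def cEdges {V : Type*} (E S : Set (Sym2 V)) : Set (Sym2 (CVert S)) :=
  (Sym2.map (cmk S)) '' (E \ S)

/-- The contracted weight function: each merged vertex carries the sum of the weights
of the vertices identified into it. -/
noncomputable def cWeight {V : Type*} (S : Set (Sym2 V)) (w : V -> Nat) : CVert S -> Nat :=
  fun c => ∑ᶠ v ∈ {v : V | cmk S v = c}, w v

section Aux

variable {V : Type*}

lemma properCol_cEdges_iff (E S : Set (Sym2 V)) (k' : CVert S → ℕ) :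
    ProperCol (cEdges E S) k' ↔ ProperCol (E \ S) (fun v => k' (cmk S v)) := by
  constructor
  · intro h u v huv
    exact h (cmk S u) (cmk S v) ⟨s(u, v), huv, Sym2.map_pair_eq _ _ _⟩
  · intro h c c' hcc'
    obtain ⟨f, hf, hmap⟩ := hcc'
    induction f using Sym2.ind with
    | _ u v =>
      rw [Sym2.map_pair_eq] at hmap
      rcases Sym2.eq_iff.mp hmap with ⟨h1, h2⟩ | ⟨h1, h2⟩
      · rw [← h1, ← h2]; exact h u v hf
      · rw [← h1, ← h2]; exact (h u v hf).symm

lemma finsum_weight_eq [Finite V] (S : Set (Sym2 V)) (w : V → ℕ) (k' : CVert S → ℕ) (i : ℕ) :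
    (∑ᶠ v ∈ {v : V | k' (cmk S v) = i}, w v) =
      ∑ᶠ c ∈ {c : CVert S | k' c = i}, cWeight S w c := by
  haveI : Finite (CVert S) := Quotient.finite _
  have hU : {v : V | k' (cmk S v) = i} =
      ⋃ c ∈ {c : CVert S | k' c = i}, {v : V | cmk S v = c} := by
    ext v
    simp only [Set.mem_setOf_eq, Set.mem_iUnion]
    constructor
    · intro h; exact ⟨cmk S v, h, rfl⟩
    · rintro ⟨c, hc, hv⟩; rw [hv]; exact hc
  rw [hU, finsum_mem_biUnion]
  · rfl
  · intro c _ c' _ hne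
    refine Set.disjoint_left.mpr fun v hv hv' => hne ?_
    exact hv.symm.trans hv'
  · exact Set.toFinite _
  · intro c _; exact Set.toFinite _

lemma const_of_eq (a b : V) (k : V → ℕ) (hk : k a = k b) :
    ∀ x y : V, (cSetoid ({s(a, b)} : Set (Sym2 V))).r x y → k x = k y := by
  intro x y h
  have h' : Relation.EqvGen (fun x y : V => s(x, y) ∈ ({s(a, b)} : Set (Sym2 V))) x y := h
  clear h
  induction h' with
  | rel x y hxy =>
    rcases Sym2.eq_iff.mp (Set.mem_singleton_iff.mp hxy) with ⟨h1, h2⟩ | ⟨h1, h2⟩ <;>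
      subst h1 <;> subst h2
    · exact hk
    · exact hk.symm
  | refl => rfl
  | symm _ _ _ ih => exact ih.symm
  | trans _ _ _ _ _ ih1 ih2 => exact ih1.trans ih2

lemma colorings_finite [Finite V] (E : Set (Sym2 V)) (w : V → ℕ) (hw : ∀ v, 0 < w v)
    (d : ℕ →₀ ℕ) :
    {k : V → ℕ | ProperCol E k ∧ ∀ i : ℕ, (∑ᶠ v ∈ {v : V | k v = i}, w v) = d i}.Finite := by
  apply Set.Finite.subset (Set.Finite.pi (t := fun _ : V => (d.support : Set ℕ))
    (fun _ => (d.support : Set ℕ).toFinite))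
  intro k hk v _
  have h1 := hk.2 (k v)
  have hsf : ({v' : V | k v' = k v}).Finite := Set.toFinite _
  rw [finsum_mem_eq_finite_toFinset_sum _ hsf] at h1
  have hmem : v ∈ hsf.toFinset := by simp [Set.Finite.mem_toFinset]
  have hle := Finset.single_le_sum (f := w) (fun i _ => Nat.zero_le _) hmem
  have hd : 0 < d (k v) := lt_of_lt_of_le (hw v) (h1 ▸ hle)
  simpa [Finsupp.mem_support_iff] using hd.ne'

end Aux


/-- deletion-contraction for weighted chromatic symmetric functions:
`X_{(G,w)} = X_{(G-e,w)} - X_{(G/e, w_{G/e})}` for any edge `e` (possibly a loop). -/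
theorem stmt5 {V : Type*} [Finite V] (E : Set (Sym2 V)) (w : V → Nat)
    (hw : ∀ v, 0 < w v) (e : Sym2 V) (he : e ∈ E) :
    csfW E w = csfW (E \ {e}) w - csfW (cEdges E {e}) (cWeight {e} w) := by
  classical
  induction e using Sym2.ind with
  | _ a b =>
  funext d
  set S : Set (Sym2 V) := {s(a, b)} with hSdef
  show (Nat.card {k : V → Nat |
      ProperCol E k ∧ ∀ i : Nat, (∑ᶠ v ∈ {v : V | k v = i}, w v) = d i} : ℤ) =
    (Nat.card {k : V → Nat |
      ProperCol (E \ S) k ∧ ∀ i : Nat, (∑ᶠ v ∈ {v : V | k v = i}, w v) = d i} : ℤ) -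
    (Nat.card {k' : CVert S → Nat |
      ProperCol (cEdges E S) k' ∧
        ∀ i : Nat, (∑ᶠ c ∈ {c : CVert S | k' c = i}, cWeight S w c) = d i} : ℤ)
  set A := {k : V → Nat | ProperCol E k ∧ ∀ i : Nat, (∑ᶠ v ∈ {v : V | k v = i}, w v) = d i}
    with hAdef
  set B := {k : V → Nat | ProperCol (E \ S) k ∧
      ∀ i : Nat, (∑ᶠ v ∈ {v : V | k v = i}, w v) = d i} with hBdef
  set C := {k' : CVert S → Nat | ProperCol (cEdges E S) k' ∧
      ∀ i : Nat, (∑ᶠ c ∈ {c : CVert S | k' c = i}, cWeight S w c) = d i} with hCdef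
  set B' := {k : V → Nat | k ∈ B ∧ k a = k b} with hB'def
  have hAfin : A.Finite := colorings_finite E w hw d
  have hBfin : B.Finite := colorings_finite (E \ S) w hw d
  have hB'fin : B'.Finite := hBfin.subset fun k hk => hk.1
  -- A is the set of elements of B with k a ≠ k b
  have hAsub : ∀ k ∈ A, k ∈ B ∧ k a ≠ k b := by
    intro k hk
    refine ⟨⟨fun u v huv => hk.1 u v huv.1, hk.2⟩, hk.1 a b he⟩
  have hsplit : B = A ∪ B' := by
    ext k
    constructor
    · intro hk
      by_cases hab : k a = k b
      · exact Or.inr ⟨hk, hab⟩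
      · refine Or.inl ⟨fun u v huv => ?_, hk.2⟩
        by_cases hS : s(u, v) ∈ S
        · rcases Sym2.eq_iff.mp (Set.mem_singleton_iff.mp hS) with ⟨h1, h2⟩ | ⟨h1, h2⟩ <;>
            subst h1 <;> subst h2
          · exact hab
          · exact fun h => hab h.symm
        · exact hk.1 u v ⟨huv, hS⟩
    · rintro (hk | hk)
      · exact (hAsub k hk).1
      · exact hk.1
  have hdisj : Disjoint A B' := by
    refine Set.disjoint_left.mpr fun k hkA hkB' => ?_
    exact (hAsub k hkA).2 hkB'.2
  -- bijection between C and B'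
  have hab : cmk S a = cmk S b :=
    Quotient.sound (Relation.EqvGen.rel a b (Set.mem_singleton _))
  have hCB' : Nat.card ↥C = Nat.card ↥B' := by
    refine Nat.card_congr (Equiv.ofBijective (fun k' => ⟨fun v => (k' : CVert S → ℕ) (cmk S v),
      ?_, ?_⟩) ⟨?_, ?_⟩)
    · exact ⟨(properCol_cEdges_iff E S k').mp k'.2.1,
        fun i => (finsum_weight_eq S w k' i).trans (k'.2.2 i)⟩
    · exact congrArg (k' : CVert S → ℕ) hab
    · rintro ⟨k', hk'⟩ ⟨l', hl'⟩ h
      have h2 : ∀ v, k' (cmk S v) = l' (cmk S v) := fun v =>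
        congrFun (congrArg Subtype.val h) v
      refine Subtype.ext (funext fun c => ?_)
      exact Quotient.inductionOn c h2
    · rintro ⟨k, hk⟩
      refine ⟨⟨Quotient.lift k (const_of_eq a b k hk.2), ?_, ?_⟩, ?_⟩
      · exact (properCol_cEdges_iff E S _).mpr hk.1.1
      · intro i
        refine (finsum_weight_eq S w (Quotient.lift k (const_of_eq a b k hk.2)) i).symm.trans ?_
        exact hk.1.2 i
      · exact Subtype.ext rfl
  -- counting
  have hBcard : B.ncard = A.ncard + B'.ncard := by
    rw [hsplit]
    exact Set.ncard_union_eq hdisj hAfin hB'fin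
  rw [Nat.card_coe_set_eq, Nat.card_coe_set_eq, hCB', Nat.card_coe_set_eq]
  omega
end

section
/- Let G be a simple graph with edges e₁ = uv₁ and e₂ = uv₂ sharing the endpoint u, such that v₁ and v₂ are not adjacent in G. Then X_G − X_{G − e₁ + v₁v₂} = X_{G − e₂} − X_{(G − e₁ + v₁v₂) − e₂}. -/
open SimpleGraph

lemma properCol_del {V : Type*} (E : Set (Sym2 V)) (k : V → ℕ) (a b : V) (h : s(a,b) ∈ E) :
    ProperCol E k ↔ ProperCol (E \ {s(a,b)}) k ∧ k a ≠ k b := by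
  constructor
  · intro hp; exact ⟨fun x y hxy => hp x y hxy.1, hp a b h⟩
  · rintro ⟨hp, hab⟩ x y hxy
    by_cases hc : s(x,y) = s(a,b)
    · rw [Sym2.eq_iff] at hc
      rcases hc with ⟨rfl, rfl⟩ | ⟨rfl, rfl⟩
      · exact hab
      · exact fun h' => hab h'.symm
    · exact hp x y ⟨hxy, hc⟩

lemma finite_colorings {V : Type*} [Finite V] (E : Set (Sym2 V)) (d : ℕ →₀ ℕ) :
    {k : V → ℕ | ProperCol E k ∧ ∀ i : ℕ, (∑ᶠ v ∈ {v : V | k v = i}, (1:ℕ)) = d i}.Finite := by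
  apply Set.Finite.subset (Set.Finite.pi (fun _ : V => (d.support : Set ℕ).toFinite))
  rintro k ⟨-, hk⟩ v -
  simp only [Finset.mem_coe, Finsupp.mem_support_iff]
  rw [← hk (k v)]
  have hfin : {v' : V | k v' = k v}.Finite := Set.toFinite _
  rw [← hfin.coe_toFinset, finsum_mem_coe_finset, Finset.sum_const, smul_eq_mul, mul_one]
  have hv : v ∈ hfin.toFinset := by simp
  exact (Finset.card_pos.mpr ⟨v, hv⟩).ne'

/-- the Orellana-Scott triangle relation
`X_G - X_{G-e₁+v₁v₂} = X_{G-e₂} - X_{(G-e₁+v₁v₂)-e₂}`. -/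
theorem stmt9 {V : Type*} [Finite V] (G : SimpleGraph V) (u v₁ v₂ : V)
    (h₁ : G.Adj u v₁) (h₂ : G.Adj u v₂) (hne : v₁ ≠ v₂) (hnadj : ¬ G.Adj v₁ v₂) :
    csf G - csfW ((G.edgeSet \ {s(u, v₁)}) ∪ {s(v₁, v₂)}) (fun _ => 1) =
      csfW (G.edgeSet \ {s(u, v₂)}) (fun _ => 1) -
        csfW ((((G.edgeSet \ {s(u, v₁)}) ∪ {s(v₁, v₂)}) \ {s(u, v₂)})) (fun _ => 1) := by
  have hu1 : u ≠ v₁ := h₁.ne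
  have hu2 : u ≠ v₂ := h₂.ne
  set A := G.edgeSet with hA
  set B := (A \ {s(u, v₁)}) ∪ {s(v₁, v₂)} with hB
  set C := A \ {s(u, v₂)} with hC
  set D := B \ {s(u, v₂)} with hD
  have huv2A : s(u, v₂) ∈ A := h₂
  have huv1A : s(u, v₁) ∈ A := h₁
  have hv12A : s(v₁, v₂) ∉ A := hnadj
  have hne12 : s(u, v₂) ≠ s(u, v₁) := by
    intro h; rw [Sym2.eq_iff] at h
    rcases h with ⟨-, h⟩ | ⟨h, -⟩
    · exact hne h.symm
    · exact hu1 h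
  have hne12' : s(v₁, v₂) ≠ s(u, v₂) := by
    intro h; rw [Sym2.eq_iff] at h
    rcases h with ⟨h, -⟩ | ⟨-, h⟩
    · exact hu1 h.symm
    · exact hu2 h.symm
  have huv2B : s(u, v₂) ∈ B := Or.inl ⟨huv2A, hne12⟩
  have huv1C : s(u, v₁) ∈ C := ⟨huv1A, fun h => hne12 h.symm⟩
  have hv12D : s(v₁, v₂) ∈ D := ⟨Or.inr rfl, hne12'⟩
  -- the common edge set
  have hE0 : C \ {s(u, v₁)} = D \ {s(v₁, v₂)} := by
    rw [hC, hD, hB]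
    ext e
    simp only [Set.mem_diff, Set.mem_union, Set.mem_singleton_iff]
    constructor
    · rintro ⟨⟨heA, he2⟩, he1⟩
      exact ⟨⟨Or.inl ⟨heA, he1⟩, he2⟩, fun h => hv12A (h ▸ heA)⟩
    · rintro ⟨⟨he, he2⟩, he12⟩
      rcases he with ⟨heA, he1⟩ | h
      · exact ⟨⟨heA, he2⟩, he1⟩
      · exact absurd h he12
  funext d
  have hsub : ∀ f g : MvPowerSeries ℕ ℤ, (f - g) d = f d - g d := fun _ _ => rfl
  rw [hsub, hsub]
  simp only [csf, csfW]
  set Q : Set (V → ℕ) := {k | k u ≠ k v₂} with hQ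
  set S : Set (Sym2 V) → Set (V → ℕ) := fun E =>
    {k : V → ℕ | ProperCol E k ∧ ∀ i : ℕ, (∑ᶠ v ∈ {v : V | k v = i}, (1:ℕ)) = d i} with hS
  have hSA : S A = S C ∩ Q := by
    ext k
    simp only [hS, hQ, Set.mem_setOf_eq, Set.mem_inter_iff,
      properCol_del A k u v₂ huv2A, ← hC]
    tauto
  have hSB : S B = S D ∩ Q := by
    ext k
    simp only [hS, hQ, Set.mem_setOf_eq, Set.mem_inter_iff,
      properCol_del B k u v₂ huv2B, ← hD]
    tauto
  have hSCD : S C \ Q = S D \ Q := by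
    ext k
    simp only [hS, hQ, Set.mem_diff, Set.mem_setOf_eq, not_not,
      properCol_del C k u v₁ huv1C, properCol_del D k v₁ v₂ hv12D, hE0]
    constructor
    · rintro ⟨⟨⟨hp, hk1⟩, hprof⟩, hk2⟩
      exact ⟨⟨⟨hp, fun h => hk1 (hk2.trans h.symm)⟩, hprof⟩, hk2⟩
    · rintro ⟨⟨⟨hp, hk1⟩, hprof⟩, hk2⟩
      exact ⟨⟨⟨hp, fun h => hk1 (h.symm.trans hk2)⟩, hprof⟩, hk2⟩
  have hCfin : (S C).Finite := finite_colorings C d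
  have hDfin : (S D).Finite := finite_colorings D d
  have hCcard := Set.ncard_inter_add_ncard_diff_eq_ncard (S C) Q hCfin
  have hDcard := Set.ncard_inter_add_ncard_diff_eq_ncard (S D) Q hDfin
  have e1 : Nat.card (S A) = (S C ∩ Q).ncard := by rw [hSA, Nat.card_coe_set_eq]
  have e2 : Nat.card (S B) = (S D ∩ Q).ncard := by rw [hSB, Nat.card_coe_set_eq]
  have e3 : Nat.card (S C) = (S C).ncard := Nat.card_coe_set_eq _
  have e4 : Nat.card (S D) = (S D).ncard := Nat.card_coe_set_eq _
  have e5 : (S C \ Q).ncard = (S D \ Q).ncard := by rw [hSCD]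
  show (Nat.card (S A) : ℤ) - Nat.card (S B) = (Nat.card (S C) : ℤ) - Nat.card (S D)
  omega
end
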